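/- arXiv:2203.10630 — 7 statements merged into one kernel-verified Lean document; each statement's English description precedes it below -/
import Mathlib

section
/- Let G = (X, Y, E) be a bipartite graph in which every vertex of Y has at least one neighbor, let d = max_{y ∈ Y} deg(y), and let k be the minimum cardinality of a subset of X that dominates Y. Then the number of subsets D ⊆ X of cardinality k that dominate Y is at most d^k. -/
/-!
Induct on `k`, with the target `Y` replaced by an arbitrary finite set `S` all of whose
dominating sets have at least `k` elements. Fix `y ∈ S`: every dominating set of size `k + 1`
contains a neighbour `x` of `y` (at most `d` choices), and removing `x` leaves a dominating set
of size `k` for the vertices of `S` not adjacent to `x`, all of whose dominating sets have at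
least `k` elements.
-/

open Finset

section Domination

variable {X Y : Type*} (E : X → Y → Prop) [∀ x y, Decidable (E x y)]

def Dominates (D : Finset X) (S : Finset Y) : Prop :=
  ∀ y ∈ S, ∃ x ∈ D, E x y

instance (D : Finset X) (S : Finset Y) : Decidable (Dominates E D S) := by
  unfold Dominates
  infer_instance

variable {E}

theorem Dominates.insert_of_filter [DecidableEq X] {D : Finset X} {S : Finset Y} {x : X}
    (h : Dominates E D {y ∈ S | ¬E x y}) : Dominates E (insert x D) S := by
  intro y hy
  by_cases hxy : E x y
  · exact ⟨x, mem_insert_self x D, hxy⟩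
  · obtain ⟨x', hx', hE⟩ := h y (mem_filter.2 ⟨hy, hxy⟩)
    exact ⟨x', mem_insert_of_mem hx', hE⟩

theorem Dominates.erase_filter [DecidableEq X] {D : Finset X} {S : Finset Y}
    (h : Dominates E D S) (x : X) : Dominates E (D.erase x) {y ∈ S | ¬E x y} := by
  intro y hy
  obtain ⟨hyS, hxy⟩ := mem_filter.1 hy
  obtain ⟨x', hx', hE⟩ := h y hyS
  exact ⟨x', mem_erase.2 ⟨fun h => hxy (h ▸ hE), hx'⟩, hE⟩

theorem le_card_of_dominates_filter [DecidableEq X] {S : Finset Y} {k : ℕ}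
    (hmin : ∀ D : Finset X, Dominates E D S → k + 1 ≤ #D) (x : X) (D : Finset X)
    (hD : Dominates E D {y ∈ S | ¬E x y}) : k ≤ #D := by
  have := hmin _ hD.insert_of_filter
  have := card_insert_le x D
  omega

variable [Fintype X]

variable (E) in
def dominatingSets (S : Finset Y) (k : ℕ) : Finset (Finset X) :=
  {D : Finset X | #D = k ∧ Dominates E D S}

theorem dominatingSets_succ_subset [DecidableEq X] {S : Finset Y} {y : Y} (hy : y ∈ S)
    (k : ℕ) :
    dominatingSets E S (k + 1) ⊆
      ({x | E x y} : Finset X).biUnion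
        fun x => (dominatingSets E {y ∈ S | ¬E x y} k).image (insert x) := by
  intro D hD
  obtain ⟨hcard, hdom⟩ := (mem_filter.1 hD).2
  obtain ⟨x, hxD, hxy⟩ := hdom y hy
  refine mem_biUnion.2 ⟨x, mem_filter.2 ⟨mem_univ x, hxy⟩, mem_image.2 ⟨D.erase x, ?_, ?_⟩⟩
  · refine mem_filter.2 ⟨mem_univ _, ?_, hdom.erase_filter x⟩
    rw [card_erase_of_mem hxD, hcard, Nat.add_sub_cancel]
  · exact insert_erase hxD

theorem card_dominatingSets_le_pow [DecidableEq X] {d : ℕ} :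
    ∀ (k : ℕ) (S : Finset Y), (∀ y ∈ S, #{x | E x y} ≤ d) →
      (∀ D : Finset X, Dominates E D S → k ≤ #D) → #(dominatingSets E S k) ≤ d ^ k
  | 0, S, _, _ => by
    refine (card_le_one.2 fun D₁ h₁ D₂ h₂ => ?_).trans (pow_zero d).ge
    rw [card_eq_zero.1 (mem_filter.1 h₁).2.1, card_eq_zero.1 (mem_filter.1 h₂).2.1]
  | k + 1, S, hd, hmin => by
    obtain ⟨y, hy⟩ : S.Nonempty := by
      by_contra hS
      have := hmin ∅ fun y hy => (hS ⟨y, hy⟩).elim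
      simp at this
    have hpiece (x : X) : #((dominatingSets E {y ∈ S | ¬E x y} k).image (insert x)) ≤ d ^ k :=
      card_image_le.trans <| card_dominatingSets_le_pow k _
        (fun y' hy' => hd y' (mem_filter.1 hy').1) (le_card_of_dominates_filter hmin x)
    calc #(dominatingSets E S (k + 1))
        ≤ ∑ x ∈ {x | E x y}, #((dominatingSets E {y ∈ S | ¬E x y} k).image (insert x)) :=
          (card_le_card (dominatingSets_succ_subset hy k)).trans card_biUnion_le
      _ ≤ #{x | E x y} * d ^ k := sum_le_card_nsmul _ _ _ fun x _ => hpiece x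
      _ ≤ d * d ^ k := Nat.mul_le_mul_right _ (hd y hy)
      _ = d ^ (k + 1) := (pow_succ' d k).symm

end Domination

theorem stmt2_general {X Y : Type} [Fintype X] [Fintype Y] (E : X → Y → Prop)
    [∀ x y, Decidable (E x y)]
    (d : ℕ)
    (hd : d = Finset.univ.sup fun y : Y => (Finset.univ.filter fun x : X => E x y).card)
    (k : ℕ)
    (hk : IsLeast {c : ℕ | ∃ D : Finset X, D.card = c ∧ ∀ y : Y, ∃ x ∈ D, E x y} k) :
    {D : Finset X | D.card = k ∧ ∀ y : Y, ∃ x ∈ D, E x y}.ncard ≤ d ^ k := by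
  classical
  have hdeg (y : Y) (_ : y ∈ univ) : #{x | E x y} ≤ d :=
    hd ▸ le_sup (f := fun y : Y => #{x | E x y}) (mem_univ y)
  have hmin (D : Finset X) (hD : Dominates E D univ) : k ≤ #D :=
    hk.2 ⟨D, rfl, fun y => hD y (mem_univ y)⟩
  have hset : {D : Finset X | D.card = k ∧ ∀ y : Y, ∃ x ∈ D, E x y} =
      (dominatingSets E univ k : Set (Finset X)) := by
    ext D
    simp [dominatingSets, Dominates]
  rw [hset, Set.ncard_coe_finset]
  exact card_dominatingSets_le_pow k univ hdeg hmin

/-- Let `G = (X, Y, E)` be a bipartite graph in which every vertex of `Y` has a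
neighbour, let `d = max_{y ∈ Y} deg(y)`, and let `k` be the minimum cardinality of a
subset of `X` dominating `Y`.  Then the number of subsets `D ⊆ X` of cardinality `k`
that dominate `Y` is at most `d ^ k`. -/
theorem stmt2 {X Y : Type} [Fintype X] [Fintype Y] (E : X → Y → Prop)
    [∀ x y, Decidable (E x y)]
    (hcov : ∀ y : Y, ∃ x : X, E x y)
    (d : ℕ)
    (hd : d = Finset.univ.sup fun y : Y => (Finset.univ.filter fun x : X => E x y).card)
    (k : ℕ)
    (hk : IsLeast {c : ℕ | ∃ D : Finset X, D.card = c ∧ ∀ y : Y, ∃ x ∈ D, E x y} k) :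
    {D : Finset X | D.card = k ∧ ∀ y : Y, ∃ x ∈ D, E x y}.ncard ≤ d ^ k :=
  stmt2_general E d hd k hk
end

section
/- For all integers d ≥ 2 and k ≥ 2, there exists a connected Y-convex bipartite graph G = (X, Y, E) such that max_{y ∈ Y} deg(y) = d, every minimum cardinality red dominating set of G has cardinality exactly k, and the number of minimum cardinality red dominating sets of G is exactly (d−1)^k. (In particular, the upper bound of order d^k on the number of MCRD sets is tight up to the base.) -/
/-- The simple graph on `A ⊕ B` associated with a bipartite graph given by the
adjacency relation `E : A → B → Prop` between the two sides. -/
def biAdj {A B : Type} (E : A → B → Prop) : SimpleGraph (A ⊕ B) where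
  Adj u v := (∃ x y, E x y ∧ u = Sum.inl x ∧ v = Sum.inr y) ∨
             (∃ x y, E x y ∧ u = Sum.inr y ∧ v = Sum.inl x)
  symm := by
    constructor
    rintro u v (⟨x, y, h, rfl, rfl⟩ | ⟨x, y, h, rfl, rfl⟩)
    · exact Or.inr ⟨x, y, h, rfl, rfl⟩
    · exact Or.inl ⟨x, y, h, rfl, rfl⟩
  loopless := by
    constructor
    rintro u (⟨x, y, h, rfl, hv⟩ | ⟨x, y, h, rfl, hv⟩) <;> simp at hv

namespace Stmt3Aux

abbrev XT (k e : ℕ) := (Fin k × Fin e) ⊕ Fin (k - 1)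

def L {k e : ℕ} : XT k e → ℕ
  | .inl p => 2 * p.1.val
  | .inr j => 2 * j.val + 1

def R {k e : ℕ} : XT k e → ℕ
  | .inl p => 2 * p.1.val + 1
  | .inr j => 2 * j.val + 2

def blk {k e : ℕ} : XT k e → ℕ
  | .inl p => p.1.val
  | .inr j => j.val

lemma L_le_R {k e : ℕ} (u : XT k e) : L u ≤ R u := by
  cases u <;> simp [L, R]

lemma R_lt {k e : ℕ} (hk : 1 ≤ k) (u : XT k e) : R u < 2 * k := by
  cases u with
  | inl p => have := p.1.isLt; simp only [R]; omega
  | inr j => have := j.isLt; simp only [R]; omega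

lemma blk_lt {k e : ℕ} (hk : 1 ≤ k) (u : XT k e) : blk u < k := by
  cases u with
  | inl p => exact p.1.isLt
  | inr j => have := j.isLt; simp only [blk]; omega

lemma blk_eq_of_cov_odd {k e : ℕ} {u : XT k e} {i : ℕ}
    (h1 : L u ≤ 2 * i + 1) (h2 : 2 * i + 1 ≤ R u) : blk u = i := by
  cases u with
  | inl p => simp only [L, R, blk] at *; omega
  | inr j => simp only [L, R, blk] at *; omega

lemma char {k e : ℕ} (hk : 2 ≤ k) (D : Finset (XT k e)) (hcard : D.card = k)
    (hdom : ∀ y < 2 * k, ∃ u ∈ D, L u ≤ y ∧ y ≤ R u) :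
    ∃ f : Fin k → Fin e, D = Finset.univ.image (fun i => Sum.inl (i, f i)) := by
  -- for each i, an element of D with block i
  have hsurj : ∀ i : Fin k, ∃ u ∈ D, blk u = i.val := by
    intro i
    obtain ⟨u, hu, h1, h2⟩ := hdom (2 * i.val + 1) (by omega)
    exact ⟨u, hu, blk_eq_of_cov_odd h1 h2⟩
  classical
  let g : Fin k → XT k e := fun i => (hsurj i).choose
  have hgD : ∀ i, g i ∈ D := fun i => (hsurj i).choose_spec.1
  have hgb : ∀ i, blk (g i) = i.val := fun i => (hsurj i).choose_spec.2
  have hginj : Function.Injective g := by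
    intro i i' h
    have := hgb i; rw [h, hgb i'] at this; exact Fin.ext this.symm
  have himg : Finset.univ.image g = D := by
    apply Finset.eq_of_subset_of_card_le
    · intro u hu
      obtain ⟨i, _, rfl⟩ := Finset.mem_image.mp hu
      exact hgD i
    · rw [Finset.card_image_of_injective _ hginj, Finset.card_univ, Fintype.card_fin, hcard]
  -- each g i is an inl
  have hinl : ∀ t : ℕ, ∀ ht : t < k, ∃ c : Fin e, g ⟨t, ht⟩ = Sum.inl (⟨t, ht⟩, c) := by
    intro t
    induction t with
    | zero =>
      intro ht
      obtain ⟨u, hu, h1, h2⟩ := hdom 0 (by omega)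
      obtain ⟨i, _, rfl⟩ := Finset.mem_image.mp (himg ▸ hu)
      rcases hgi : g i with ⟨i', c⟩ | j
      · rw [hgi] at h1
        simp only [L] at h1
        have hi' : i'.val = 0 := by omega
        have hii : i = ⟨0, ht⟩ := by
          apply Fin.ext; rw [← hgb i, hgi]; simpa [blk]
        rw [hii] at hgi
        exact ⟨c, by rw [hgi]; congr 2; exact Fin.ext hi'⟩
      · rw [hgi] at h1; simp only [L] at h1; omega
    | succ t ih =>
      intro ht
      have ht' : t < k := by omega
      obtain ⟨c', hc'⟩ := ih ht'
      obtain ⟨u, hu, h1, h2⟩ := hdom (2 * (t + 1)) (by omega)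
      obtain ⟨i, _, rfl⟩ := Finset.mem_image.mp (himg ▸ hu)
      rcases hgi : g i with ⟨i', c⟩ | j
      · rw [hgi] at h1 h2
        simp only [L, R] at h1 h2
        have hi' : i'.val = t + 1 := by omega
        have hii : i = ⟨t + 1, ht⟩ := by
          apply Fin.ext; rw [← hgb i, hgi]; simpa [blk]
        rw [hii] at hgi
        exact ⟨c, by rw [hgi]; congr 2; exact Fin.ext hi'⟩
      · rw [hgi] at h1 h2
        simp only [L, R] at h1 h2
        have hj : j.val = t := by omega
        have hii : i = ⟨t, ht'⟩ := by
          apply Fin.ext; rw [← hgb i, hgi]; simpa [blk]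
        rw [hii, hc'] at hgi
        exact absurd hgi (by simp)
  choose f hf using fun i : Fin k => hinl i.val i.isLt
  refine ⟨f, ?_⟩
  rw [← himg]
  apply Finset.image_congr
  intro i _
  have := hf i
  simpa using this

lemma phi_mem {k e : ℕ} (hk : 2 ≤ k) (f : Fin k → Fin e) :
    (Finset.univ.image (fun i => Sum.inl (i, f i) : Fin k → XT k e)).card = k ∧
      ∀ y < 2 * k, ∃ u ∈ Finset.univ.image (fun i => Sum.inl (i, f i) : Fin k → XT k e),
        L u ≤ y ∧ y ≤ R u := by
  have hinj : Function.Injective (fun i => Sum.inl (i, f i) : Fin k → XT k e) := by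
    intro i i' h
    exact (Prod.ext_iff.mp (Sum.inl.inj h)).1
  constructor
  · rw [Finset.card_image_of_injective _ hinj, Finset.card_univ, Fintype.card_fin]
  · intro y hy
    refine ⟨Sum.inl (⟨y / 2, by omega⟩, f ⟨y / 2, by omega⟩),
      Finset.mem_image_of_mem _ (Finset.mem_univ _), ?_, ?_⟩ <;> simp only [L, R] <;> omega

lemma count {k e : ℕ} (hk : 2 ≤ k) :
    {D : Finset (XT k e) | D.card = k ∧
      ∀ y < 2 * k, ∃ u ∈ D, L u ≤ y ∧ y ≤ R u}.ncard = e ^ k := by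
  classical
  have hset : {D : Finset (XT k e) | D.card = k ∧ ∀ y < 2 * k, ∃ u ∈ D, L u ≤ y ∧ y ≤ R u}
      = Set.range (fun f : Fin k → Fin e => Finset.univ.image (fun i => Sum.inl (i, f i))) := by
    ext D
    constructor
    · rintro ⟨h1, h2⟩
      obtain ⟨f, hf⟩ := char hk D h1 h2
      exact ⟨f, hf.symm⟩
    · rintro ⟨f, rfl⟩
      exact phi_mem hk f
  rw [hset]
  have hphi : Function.Injective
      (fun f : Fin k → Fin e => (Finset.univ.image (fun i => Sum.inl (i, f i)) : Finset (XT k e))) := by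
    intro f f' h
    have h' : Finset.univ.image (fun i => Sum.inl (i, f i) : Fin k → XT k e)
        = Finset.univ.image (fun i => Sum.inl (i, f' i) : Fin k → XT k e) := h
    funext i
    have : (Sum.inl (i, f i) : XT k e) ∈ Finset.univ.image (fun i => Sum.inl (i, f' i) : Fin k → XT k e) := by
      rw [← h']; exact Finset.mem_image_of_mem _ (Finset.mem_univ _)
    obtain ⟨i', _, hi'⟩ := Finset.mem_image.mp this
    obtain ⟨h1, h2⟩ := Prod.ext_iff.mp (Sum.inl.inj hi')
    subst h1
    exact h2.symm
  rw [← Nat.card_coe_set_eq, Nat.card_range_of_injective hphi]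
  simp [Nat.card_eq_fintype_card]

-- degree lemmas
lemma deg_split {k e : ℕ} (y : ℕ) :
    (Finset.univ.filter fun u : XT k e => L u ≤ y ∧ y ≤ R u).card
      = (Finset.univ.filter fun p : Fin k × Fin e =>
          2 * p.1.val ≤ y ∧ y ≤ 2 * p.1.val + 1).card
        + (Finset.univ.filter fun j : Fin (k - 1) =>
            2 * j.val + 1 ≤ y ∧ y ≤ 2 * j.val + 2).card := by
  classical
  rw [Finset.card_filter, Finset.card_filter, Finset.card_filter, Fintype.sum_sum_type]
  congr 1 <;> apply Finset.sum_congr rfl <;> intro u _ <;> simp [L, R]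

lemma deg_inl {k e : ℕ} {y : ℕ} (hy : y < 2 * k) :
    (Finset.univ.filter fun p : Fin k × Fin e =>
        2 * p.1.val ≤ y ∧ y ≤ 2 * p.1.val + 1).card = e := by
  classical
  rw [Finset.card_filter, Fintype.sum_prod_type]
  have : ∀ i : Fin k, (∑ c : Fin e,
      if 2 * i.val ≤ y ∧ y ≤ 2 * i.val + 1 then 1 else 0) =
      if 2 * i.val ≤ y ∧ y ≤ 2 * i.val + 1 then e else 0 := by
    intro i
    by_cases h : 2 * i.val ≤ y ∧ y ≤ 2 * i.val + 1 <;> simp [h]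
  simp only [this]
  rw [Finset.sum_eq_single (⟨y / 2, by omega⟩ : Fin k)]
  · show (if 2 * (y / 2) ≤ y ∧ y ≤ 2 * (y / 2) + 1 then e else 0) = e
    rw [if_pos]
    constructor <;> omega
  · intro i _ hne
    rw [if_neg]
    intro ⟨h1, h2⟩
    exact hne (Fin.ext (show i.val = y / 2 by omega))
  · intro h; exact absurd (Finset.mem_univ _) h

lemma deg_inr_le {k e : ℕ} (y : ℕ) :
    (Finset.univ.filter fun j : Fin (k - 1) =>
        2 * j.val + 1 ≤ y ∧ y ≤ 2 * j.val + 2).card ≤ 1 := by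
  apply Finset.card_le_one.mpr
  intro a ha b hb
  simp only [Finset.mem_filter] at ha hb
  exact Fin.ext (by omega)

lemma deg_inr_one {k e : ℕ} (hk : 2 ≤ k) :
    1 ≤ (Finset.univ.filter fun j : Fin (k - 1) =>
        2 * j.val + 1 ≤ 1 ∧ 1 ≤ 2 * j.val + 2).card := by
  apply Finset.card_pos.mpr
  exact ⟨⟨0, by omega⟩, by simp⟩


lemma L_inl {k e : ℕ} (p : Fin k × Fin e) : L (Sum.inl p : XT k e) = 2 * p.1.val := rfl

lemma R_inl {k e : ℕ} (p : Fin k × Fin e) : R (Sum.inl p : XT k e) = 2 * p.1.val + 1 := rfl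

lemma cov_ex {k e : ℕ} (hk : 2 ≤ k) (he : 1 ≤ e) {t : ℕ} (ht : t + 1 < 2 * k) :
    ∃ u : XT k e, (L u ≤ t ∧ t ≤ R u) ∧ (L u ≤ t + 1 ∧ t + 1 ≤ R u) := by
  by_cases h2 : t % 2 = 0
  · refine ⟨Sum.inl (⟨t / 2, by omega⟩, ⟨0, he⟩), ?_⟩
    simp only [L, R]
    refine ⟨⟨?_, ?_⟩, ?_, ?_⟩ <;> show _ ≤ _ <;> omega
  · refine ⟨Sum.inr ⟨t / 2, by omega⟩, ?_⟩
    simp only [L, R]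
    refine ⟨⟨?_, ?_⟩, ?_, ?_⟩ <;> omega

end Stmt3Aux

open Stmt3Aux in
/-- For all integers `d ≥ 2` and `k ≥ 2` there is a connected `Y`-convex bipartite
graph (with `X = Fin n`, `Y = Fin m`, each `x` having the nonempty interval
neighbourhood `[l x, r x]`) such that the maximum degree over `Y` is `d`, the minimum
cardinality of a red dominating set is `k` (so every MCRD set has cardinality exactly
`k`), and the number of minimum cardinality red dominating sets is exactly
`(d - 1) ^ k`. -/
theorem stmt3 (d k : ℕ) (hd : 2 ≤ d) (hk : 2 ≤ k) :
    ∃ (n m : ℕ) (l r : Fin n → Fin m),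
      (∀ x, l x ≤ r x) ∧
      (biAdj fun (x : Fin n) (y : Fin m) => l x ≤ y ∧ y ≤ r x).Connected ∧
      (Finset.univ.sup fun y : Fin m =>
        (Finset.univ.filter fun x : Fin n => l x ≤ y ∧ y ≤ r x).card) = d ∧
      IsLeast {c : ℕ | ∃ D : Finset (Fin n), D.card = c ∧
        ∀ y : Fin m, ∃ x ∈ D, l x ≤ y ∧ y ≤ r x} k ∧
      {D : Finset (Fin n) | D.card = k ∧
        ∀ y : Fin m, ∃ x ∈ D, l x ≤ y ∧ y ≤ r x}.ncard = (d - 1) ^ k := by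
  classical
  set e := d - 1 with he_def
  have he : 1 ≤ e := by omega
  have hk1 : 1 ≤ k := by omega
  set n := k * e + (k - 1) with hn_def
  set m := 2 * k with hm_def
  have hm : 0 < m := by omega
  let ψ : Fin n ≃ XT k e :=
    finSumFinEquiv.symm.trans (Equiv.sumCongr finProdFinEquiv.symm (Equiv.refl _))
  let l : Fin n → Fin m := fun x => ⟨L (ψ x), lt_of_le_of_lt (L_le_R _) (R_lt hk1 _)⟩
  let r : Fin n → Fin m := fun x => ⟨R (ψ x), R_lt hk1 _⟩
  have hcov : ∀ (x : Fin n) (y : Fin m),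
      (l x ≤ y ∧ y ≤ r x) ↔ (L (ψ x) ≤ y.val ∧ y.val ≤ R (ψ x)) := fun x y => Iff.rfl
  refine ⟨n, m, l, r, fun x => L_le_R (ψ x), ?_, ?_, ⟨?_, ?_⟩, ?_⟩
  · -- connectivity
    set G := biAdj fun (x : Fin n) (y : Fin m) => l x ≤ y ∧ y ≤ r x with hG
    have hadj : ∀ (x : Fin n) (y : Fin m), (l x ≤ y ∧ y ≤ r x) → G.Adj (Sum.inl x) (Sum.inr y) :=
      fun x y h => Or.inl ⟨x, y, h, rfl, rfl⟩
    have key : ∀ t : ℕ, ∀ ht : t < m, G.Reachable (Sum.inr ⟨t, ht⟩) (Sum.inr ⟨0, hm⟩) := by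
      intro t
      induction t with
      | zero => intro ht; exact SimpleGraph.Reachable.refl _
      | succ t ih =>
        intro ht
        have ht' : t < m := by omega
        obtain ⟨u, ⟨hu1, hu2⟩, hu3, hu4⟩ := cov_ex (k := k) (e := e) hk he (by omega : t + 1 < 2 * k)
        have hx : ψ (ψ.symm u) = u := Equiv.apply_symm_apply ψ u
        have ha1 : G.Adj (Sum.inl (ψ.symm u)) (Sum.inr ⟨t, ht'⟩) := by
          apply hadj
          rw [hcov, hx]; exact ⟨hu1, hu2⟩
        have ha2 : G.Adj (Sum.inl (ψ.symm u)) (Sum.inr ⟨t + 1, ht⟩) := by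
          apply hadj
          rw [hcov, hx]; exact ⟨hu3, hu4⟩
        exact (ha2.symm.reachable.trans ha1.reachable).trans (ih ht')
    have hall : ∀ v, G.Reachable v (Sum.inr ⟨0, hm⟩) := by
      rintro (x | y)
      · refine (SimpleGraph.Adj.reachable (hadj x (l x) ⟨le_refl _, ?_⟩)).trans
          (key (l x).val (l x).isLt)
        exact L_le_R (ψ x)
      · exact key y.val y.isLt
    have : Nonempty (Fin n ⊕ Fin m) := ⟨Sum.inr ⟨0, hm⟩⟩
    exact SimpleGraph.Connected.mk (fun u v => (hall u).trans (hall v).symm)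
  · -- sup of degrees
    have hcard_eq : ∀ y : Fin m, (Finset.univ.filter fun x : Fin n => l x ≤ y ∧ y ≤ r x).card
        = (Finset.univ.filter fun u : XT k e => L u ≤ y.val ∧ y.val ≤ R u).card := by
      intro y
      apply Finset.card_bij' (fun x _ => ψ x) (fun u _ => ψ.symm u)
      · intro x hx
        simp only [Finset.mem_filter, Finset.mem_univ, true_and] at hx ⊢
        exact (hcov x y).mp hx
      · intro u hu
        simp only [Finset.mem_filter, Finset.mem_univ, true_and] at hu ⊢
        rw [hcov, Equiv.apply_symm_apply]; exact hu
      · intro x _; exact Equiv.symm_apply_apply ψ x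
      · intro u _; exact Equiv.apply_symm_apply ψ u
    apply le_antisymm
    · apply Finset.sup_le
      intro y _
      rw [hcard_eq y, deg_split, deg_inl y.isLt]
      have := deg_inr_le (k := k) (e := e) y.val
      omega
    · have h1m : 1 < m := by omega
      refine le_trans ?_ (Finset.le_sup (Finset.mem_univ (⟨1, h1m⟩ : Fin m)))
      rw [hcard_eq, deg_split, deg_inl (by omega : (1:ℕ) < 2 * k)]
      exact le_trans (by omega : d ≤ e + 1)
        (Nat.add_le_add_left (deg_inr_one (k := k) (e := e) hk) e)
  · -- k is achieved
    refine ⟨Finset.univ.image (fun i : Fin k => ψ.symm (Sum.inl (i, ⟨0, he⟩))), ?_, ?_⟩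
    · rw [Finset.card_image_of_injective, Finset.card_univ, Fintype.card_fin]
      intro i i' h
      exact (Prod.ext_iff.mp (Sum.inl.inj (ψ.symm.injective h))).1
    · intro y
      refine ⟨ψ.symm (Sum.inl (⟨y.val / 2, by omega⟩, ⟨0, he⟩)),
        Finset.mem_image_of_mem _ (Finset.mem_univ _), ?_⟩
      rw [hcov, Equiv.apply_symm_apply]
      have hy := y.isLt
      rw [L_inl, R_inl]
      constructor
      · show 2 * (y.val / 2) ≤ y.val; omega
      · show y.val ≤ 2 * (y.val / 2) + 1; omega
  · -- lower bound
    rintro c ⟨D, hDc, hdom⟩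
    have hpick : ∀ i : Fin k, ∃ x, x ∈ D ∧ L (ψ x) ≤ 2 * i.val + 1 ∧ 2 * i.val + 1 ≤ R (ψ x) := by
      intro i
      obtain ⟨x, hxD, hx⟩ := hdom ⟨2 * i.val + 1, by omega⟩
      exact ⟨x, hxD, (hcov x _).mp hx⟩
    choose F hFD hF1 hF2 using hpick
    have : (Finset.univ : Finset (Fin k)).card ≤ D.card := by
      apply Finset.card_le_card_of_injOn F (fun i _ => hFD i)
      intro i _ i' _ hii
      have hb1 : blk (ψ (F i)) = i.val := blk_eq_of_cov_odd (hF1 i) (hF2 i)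
      have hb2 : blk (ψ (F i')) = i'.val := blk_eq_of_cov_odd (hF1 i') (hF2 i')
      apply Fin.ext
      rw [← hb1, ← hb2, hii]
    rw [Finset.card_univ, Fintype.card_fin, hDc] at this
    exact this
  · -- counting
    have hiff : ∀ D : Finset (Fin n),
        (D.card = k ∧ ∀ y : Fin m, ∃ x ∈ D, l x ≤ y ∧ y ≤ r x)
        ↔ ((ψ.finsetCongr D).card = k ∧
            ∀ y < 2 * k, ∃ u ∈ ψ.finsetCongr D, L u ≤ y ∧ y ≤ R u) := by
      intro D
      rw [Equiv.finsetCongr_apply, Finset.card_map]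
      constructor
      · rintro ⟨h1, h2⟩
        refine ⟨h1, fun y hy => ?_⟩
        obtain ⟨x, hxD, hx⟩ := h2 ⟨y, hy⟩
        exact ⟨ψ x, Finset.mem_map_of_mem _ hxD, (hcov x ⟨y, hy⟩).mp hx⟩
      · rintro ⟨h1, h2⟩
        refine ⟨h1, fun y => ?_⟩
        obtain ⟨u, huD, hu⟩ := h2 y.val y.isLt
        obtain ⟨x, hxD, rfl⟩ := Finset.mem_map.mp huD
        exact ⟨x, hxD, (hcov x y).mpr hu⟩
    have hseteq : {D : Finset (Fin n) | D.card = k ∧ ∀ y : Fin m, ∃ x ∈ D, l x ≤ y ∧ y ≤ r x}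
        = (ψ.finsetCongr).symm '' {D : Finset (XT k e) | D.card = k ∧
            ∀ y < 2 * k, ∃ u ∈ D, L u ≤ y ∧ y ≤ R u} := by
      ext D
      simp only [Set.mem_image, Set.mem_setOf_eq]
      constructor
      · intro h
        exact ⟨ψ.finsetCongr D, (hiff D).mp h, Equiv.symm_apply_apply _ _⟩
      · rintro ⟨D', hD', rfl⟩
        apply (hiff _).mpr
        rwa [Equiv.apply_symm_apply]
    rw [hseteq, Set.ncard_image_of_injective _ (Equiv.injective _), count hk]
end

section
/- Let G = (X, Y, E) be a Y-convex bipartite graph and let D ⊆ X be a minimum cardinality red dominating set. Then for all distinct u, v ∈ D, left(u) ≠ left(v) and right(u) ≠ right(v). -/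
lemma aux_sub {n m : ℕ} (l r : Fin n → Fin m)
    (D : Finset (Fin n))
    (hdom : ∀ y : Fin m, ∃ x ∈ D, l x ≤ y ∧ y ≤ r x)
    (hmin : ∀ D' : Finset (Fin n),
      (∀ y : Fin m, ∃ x ∈ D', l x ≤ y ∧ y ≤ r x) → D.card ≤ D'.card)
    {u v : Fin n} (hu : u ∈ D) (hv : v ∈ D) (huv : u ≠ v)
    (hl : l v ≤ l u) (hr : r u ≤ r v) : False := by
  have hdom' : ∀ y : Fin m, ∃ x ∈ D.erase u, l x ≤ y ∧ y ≤ r x := by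
    intro y
    obtain ⟨x, hx, h1, h2⟩ := hdom y
    by_cases hxu : x = u
    · exact ⟨v, Finset.mem_erase.mpr ⟨huv.symm, hv⟩,
        le_trans hl (hxu ▸ h1), le_trans h2 (hxu ▸ hr)⟩
    · exact ⟨x, Finset.mem_erase.mpr ⟨hxu, hx⟩, h1, h2⟩
  have := hmin _ hdom'
  have hc : (D.erase u).card < D.card := Finset.card_erase_lt_of_mem hu
  omega

/-- Let `G` be a `Y`-convex bipartite graph (`X = Fin n`, `Y = Fin m`, each `x ∈ X`
having the nonempty interval neighbourhood `[l x, r x]`) and let `D` be a minimum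
cardinality red dominating set.  Then for all distinct `u, v ∈ D`,
`left(u) ≠ left(v)` and `right(u) ≠ right(v)`. -/
theorem stmt5 {n m : ℕ} (l r : Fin n → Fin m) (hlr : ∀ x, l x ≤ r x)
    (D : Finset (Fin n))
    (hdom : ∀ y : Fin m, ∃ x ∈ D, l x ≤ y ∧ y ≤ r x)
    (hmin : ∀ D' : Finset (Fin n),
      (∀ y : Fin m, ∃ x ∈ D', l x ≤ y ∧ y ≤ r x) → D.card ≤ D'.card) :
    ∀ u ∈ D, ∀ v ∈ D, u ≠ v → l u ≠ l v ∧ r u ≠ r v := by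
  intro u hu v hv huv
  constructor
  · intro h
    rcases le_total (r u) (r v) with hr | hr
    · exact aux_sub l r D hdom hmin hu hv huv h.ge hr
    · exact aux_sub l r D hdom hmin hv hu huv.symm h.le hr
  · intro h
    rcases le_total (l u) (l v) with hl | hl
    · exact aux_sub l r D hdom hmin hv hu huv.symm hl h.ge
    · exact aux_sub l r D hdom hmin hu hv huv hl h.le
end

section
/- Let G = (X, Y, E) be a Y-convex bipartite graph whose vertices of X are in lex-convex ordering, and let D = {u_1, u_2, …, u_k} with u_1 < u_2 < ⋯ < u_k be a minimum cardinality red dominating set. Then for every pair of consecutive elements u = u_i and v = u_{i+1} of D (1 ≤ i ≤ k−1), left(u) < left(v) ≤ right(u) + 1 ≤ right(v); in particular, N(u) ∪ N(v) consists of consecutive vertices of Y. -/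
/-- Let `G` be a `Y`-convex bipartite graph (`X = Fin n`, `Y = Fin m`, each `x ∈ X`
having the nonempty interval neighbourhood `[l x, r x]`) whose vertices of `X` are in
lex-convex ordering, and let `D` be a minimum cardinality red dominating set.  Then for
every pair of consecutive elements `u < v` of `D`,
`left(u) < left(v) ≤ right(u) + 1 ≤ right(v)`; in particular `N(u) ∪ N(v)` consists of
consecutive vertices of `Y`. -/
theorem stmt6 {n m : ℕ} (l r : Fin n → Fin m) (hlr : ∀ x, l x ≤ r x)
    (hlex : ∀ i j : Fin n, i < j → l i < l j ∨ (l i = l j ∧ r i ≤ r j))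
    (D : Finset (Fin n))
    (hdom : ∀ y : Fin m, ∃ x ∈ D, l x ≤ y ∧ y ≤ r x)
    (hmin : ∀ D' : Finset (Fin n),
      (∀ y : Fin m, ∃ x ∈ D', l x ≤ y ∧ y ≤ r x) → D.card ≤ D'.card) :
    ∀ u ∈ D, ∀ v ∈ D, u < v → (∀ w ∈ D, ¬(u < w ∧ w < v)) →
      l u < l v ∧ (l v : ℕ) ≤ (r u : ℕ) + 1 ∧ (r u : ℕ) + 1 ≤ (r v : ℕ) := by
  intro u hu v hv huv hcons
  -- Key: no element of D has its neighborhood contained in another element's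
  have key : ∀ a ∈ D, ∀ b ∈ D, a ≠ b → l b ≤ l a → r a ≤ r b → False := by
    intro a ha b hb hab hl hr
    have hdom' : ∀ y : Fin m, ∃ x ∈ D.erase a, l x ≤ y ∧ y ≤ r x := by
      intro y
      obtain ⟨x, hx, h1, h2⟩ := hdom y
      by_cases hxa : x = a
      · subst hxa
        exact ⟨b, Finset.mem_erase.mpr ⟨Ne.symm hab, hb⟩, le_trans hl h1, le_trans h2 hr⟩
      · exact ⟨x, Finset.mem_erase.mpr ⟨hxa, hx⟩, h1, h2⟩
    have hle := hmin _ hdom'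
    have hc := Finset.card_erase_of_mem ha
    have hpos : 0 < D.card := Finset.card_pos.mpr ⟨a, ha⟩
    omega
  have h1 : l u < l v := by
    rcases hlex u v huv with h | ⟨he, hre⟩
    · exact h
    · exact (key u hu v hv huv.ne he.ge hre).elim
  have h3 : (r u : ℕ) + 1 ≤ (r v : ℕ) := by
    by_contra h
    have hrv : r v ≤ r u := by
      rw [Fin.le_def]; omega
    exact key v hv u hu huv.ne' h1.le hrv
  refine ⟨h1, ?_, h3⟩
  by_contra h
  push_neg at h
  have hym : (r u : ℕ) + 1 < m := lt_trans h (l v).isLt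
  set y : Fin m := ⟨(r u : ℕ) + 1, hym⟩ with hy
  obtain ⟨w, hw, hwl, hwr⟩ := hdom y
  have hwl' : (l w : ℕ) ≤ (r u : ℕ) + 1 := hwl
  have hwr' : (r u : ℕ) + 1 ≤ (r w : ℕ) := hwr
  have htri : w ≤ u ∨ v ≤ w := by
    have := hcons w hw
    rcases lt_trichotomy w u with h' | h' | h'
    · exact Or.inl h'.le
    · exact Or.inl h'.le
    · rcases lt_trichotomy w v with h'' | h'' | h''
      · exact absurd ⟨h', h''⟩ this
      · exact Or.inr h''.ge
      · exact Or.inr h''.le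
  rcases htri with hwu | hvw
  · rcases eq_or_lt_of_le hwu with heq | hlt
    · subst heq; omega
    · rcases hlex w u hlt with hl | ⟨hle, hre⟩
      · exact key u hu w hw (ne_of_gt hlt) hl.le (by rw [Fin.le_def]; omega)
      · have : (r w : ℕ) ≤ (r u : ℕ) := hre
        omega
  · have hlv : (l v : ℕ) ≤ (l w : ℕ) := by
      rcases eq_or_lt_of_le hvw with heq | hlt
      · subst heq; rfl
      · rcases hlex v w hlt with hl | ⟨hle, _⟩
        · exact hl.le
        · exact hle.le
    omega
end

section
/- Let G = (X, Y, E) be a Y-convex bipartite graph whose vertices of X are in lex-convex ordering, and let D ⊆ X be a minimum cardinality red dominating set. Then for each vertex u ∈ D there is at most one vertex v ∈ D with v > u such that left(u) < left(v) ≤ right(u) + 1 ≤ right(v). -/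
lemma stmt7_aux {n m : ℕ} (l r : Fin n → Fin m)
    (D : Finset (Fin n))
    (hdom : ∀ y : Fin m, ∃ x ∈ D, l x ≤ y ∧ y ≤ r x)
    (hmin : ∀ D' : Finset (Fin n),
      (∀ y : Fin m, ∃ x ∈ D', l x ≤ y ∧ y ≤ r x) → D.card ≤ D'.card)
    {u v w : Fin n} (hu : u ∈ D) (hv : v ∈ D) (hw : w ∈ D)
    (huv : u < v)
    (hv' : l u < l v ∧ (l v : ℕ) ≤ (r u : ℕ) + 1 ∧ (r u : ℕ) + 1 ≤ (r v : ℕ))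
    (hw' : l u < l w ∧ (l w : ℕ) ≤ (r u : ℕ) + 1 ∧ (r u : ℕ) + 1 ≤ (r w : ℕ))
    (hne : v ≠ w) (hrv : (r v : ℕ) ≤ (r w : ℕ)) : False := by
  have hdom' : ∀ y : Fin m, ∃ x ∈ D.erase v, l x ≤ y ∧ y ≤ r x := by
    intro y
    obtain ⟨x, hx, h1, h2⟩ := hdom y
    by_cases hxv : x = v
    · subst hxv
      rw [Fin.le_def] at h1 h2
      by_cases hy : (y : ℕ) ≤ (r u : ℕ)
      · refine ⟨u, Finset.mem_erase.mpr ⟨huv.ne, hu⟩, ?_, ?_⟩ <;> rw [Fin.le_def]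
        · have := hv'.1; rw [Fin.lt_def] at this; omega
        · omega
      · refine ⟨w, Finset.mem_erase.mpr ⟨hne.symm, hw⟩, ?_, ?_⟩ <;> rw [Fin.le_def]
        · omega
        · omega
    · exact ⟨x, Finset.mem_erase.mpr ⟨hxv, hx⟩, h1, h2⟩
  have h1 := hmin (D.erase v) hdom'
  have h2 : (D.erase v).card < D.card := Finset.card_erase_lt_of_mem hv
  omega

/-- Let `G` be a `Y`-convex bipartite graph (`X = Fin n`, `Y = Fin m`, each `x ∈ X`
having the nonempty interval neighbourhood `[l x, r x]`) whose vertices of `X` are in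
lex-convex ordering, and let `D` be a minimum cardinality red dominating set.  Then for
each `u ∈ D` there is at most one `v ∈ D` with `v > u` such that
`left(u) < left(v) ≤ right(u) + 1 ≤ right(v)`. -/
theorem stmt7 {n m : ℕ} (l r : Fin n → Fin m) (hlr : ∀ x, l x ≤ r x)
    (hlex : ∀ i j : Fin n, i < j → l i < l j ∨ (l i = l j ∧ r i ≤ r j))
    (D : Finset (Fin n))
    (hdom : ∀ y : Fin m, ∃ x ∈ D, l x ≤ y ∧ y ≤ r x)
    (hmin : ∀ D' : Finset (Fin n),
      (∀ y : Fin m, ∃ x ∈ D', l x ≤ y ∧ y ≤ r x) → D.card ≤ D'.card) :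
    ∀ u ∈ D, ∀ v ∈ D, ∀ w ∈ D, u < v → u < w →
      (l u < l v ∧ (l v : ℕ) ≤ (r u : ℕ) + 1 ∧ (r u : ℕ) + 1 ≤ (r v : ℕ)) →
      (l u < l w ∧ (l w : ℕ) ≤ (r u : ℕ) + 1 ∧ (r u : ℕ) + 1 ≤ (r w : ℕ)) →
      v = w := by
  intro u hu v hv w hw huv huw hv' hw'
  by_contra hne
  rcases le_total ((r v : ℕ)) ((r w : ℕ)) with h | h
  · exact stmt7_aux l r D hdom hmin hu hv hw huv hv' hw' hne h
  · exact stmt7_aux l r D hdom hmin hu hw hv huw hw' hv' (Ne.symm hne) h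
end

section
/- Let G = (X, Y, E) be a Y-convex bipartite graph with Y = {y_1 < y_2 < ⋯ < y_m}, whose vertices of X are in lex-convex ordering, and let D = {u_1 < u_2 < ⋯ < u_k} be a minimum cardinality red dominating set. Then u_1 is adjacent to y_1, u_k is adjacent to y_m, and for each i = 1, …, k−1, left(u_i) < left(u_{i+1}) ≤ right(u_i) + 1 ≤ right(u_{i+1}); i.e., the sorted elements of every MCRD set form a chain from a neighbor of y_1 to a neighbor of y_m. -/
/-- Let `G` be a `Y`-convex bipartite graph (`X = Fin n`, `Y = Fin (m+1)`, each `x ∈ X`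
having the nonempty interval neighbourhood `[l x, r x]`) with `X` in lex-convex
ordering, and let `D` be a minimum cardinality red dominating set.  Then `D` is
nonempty, its smallest element is adjacent to the smallest vertex of `Y`, its largest
element is adjacent to the largest vertex of `Y`, and every pair of consecutive
elements `u < v` of `D` satisfies `left(u) < left(v) ≤ right(u) + 1 ≤ right(v)`:
the sorted elements of every MCRD set form a chain from a neighbour of `y_1` to a
neighbour of `y_m`. -/
theorem stmt9 {n m : ℕ} (l r : Fin n → Fin (m + 1)) (hlr : ∀ x, l x ≤ r x)
    (hlex : ∀ i j : Fin n, i < j → l i < l j ∨ (l i = l j ∧ r i ≤ r j))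
    (D : Finset (Fin n))
    (hdom : ∀ y : Fin (m + 1), ∃ x ∈ D, l x ≤ y ∧ y ≤ r x)
    (hmin : ∀ D' : Finset (Fin n),
      (∀ y : Fin (m + 1), ∃ x ∈ D', l x ≤ y ∧ y ≤ r x) → D.card ≤ D'.card) :
    ∃ hne : D.Nonempty,
      (l (D.min' hne) ≤ (0 : Fin (m + 1)) ∧ (0 : Fin (m + 1)) ≤ r (D.min' hne)) ∧
      (l (D.max' hne) ≤ Fin.last m ∧ Fin.last m ≤ r (D.max' hne)) ∧
      ∀ u ∈ D, ∀ v ∈ D, u < v → (∀ w ∈ D, ¬(u < w ∧ w < v)) →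
        l u < l v ∧ (l v : ℕ) ≤ (r u : ℕ) + 1 ∧ (r u : ℕ) + 1 ≤ (r v : ℕ) := by
  have hne : D.Nonempty := by
    obtain ⟨x, hx, -⟩ := hdom 0
    exact ⟨x, hx⟩
  -- key: no interval contained in another interval within D
  have key : ∀ a ∈ D, ∀ b ∈ D, a ≠ b → l b ≤ l a → r a ≤ r b → False := by
    intro a ha b hb hab h1 h2
    have hdom' : ∀ y : Fin (m + 1), ∃ x ∈ D.erase a, l x ≤ y ∧ y ≤ r x := by
      intro y
      obtain ⟨x, hx, hxy1, hxy2⟩ := hdom y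
      by_cases hxa : x = a
      · subst hxa
        exact ⟨b, Finset.mem_erase.2 ⟨Ne.symm hab, hb⟩, le_trans h1 hxy1,
          le_trans hxy2 h2⟩
      · exact ⟨x, Finset.mem_erase.2 ⟨hxa, hx⟩, hxy1, hxy2⟩
    have h3 := hmin _ hdom'
    have h4 : (D.erase a).card < D.card := Finset.card_erase_lt_of_mem ha
    omega
  refine ⟨hne, ?_, ?_, ?_⟩
  · -- min' is adjacent to 0
    obtain ⟨x, hx, hx0, -⟩ := hdom 0
    refine ⟨?_, Fin.zero_le _⟩
    have hmx : D.min' hne ≤ x := Finset.min'_le D x hx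
    rcases eq_or_lt_of_le hmx with heq | hlt
    · rw [heq]; exact hx0
    · rcases hlex _ _ hlt with h | ⟨h, -⟩
      · exact le_of_lt (lt_of_lt_of_le h hx0)
      · rw [h]; exact hx0
  · -- max' is adjacent to last
    obtain ⟨x, hx, -, hxl⟩ := hdom (Fin.last m)
    refine ⟨Fin.le_last _, ?_⟩
    have hmx : x ≤ D.max' hne := Finset.le_max' D x hx
    rcases eq_or_lt_of_le hmx with heq | hlt
    · rw [← heq]; exact hxl
    · exfalso
      have hlle : l x ≤ l (D.max' hne) := by
        rcases hlex _ _ hlt with h | ⟨h, -⟩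
        · exact le_of_lt h
        · exact le_of_eq h
      exact key _ (Finset.max'_mem D hne) _ hx (ne_of_gt hlt) hlle
        (le_trans (Fin.le_last _) hxl)
  · -- consecutive chain condition
    intro u hu v hv huv hbtw
    have hluv : l u < l v := by
      rcases hlex _ _ huv with h | ⟨h1, h2⟩
      · exact h
      · exact absurd (key u hu v hv (ne_of_lt huv) (le_of_eq h1.symm) h2) not_false
    have hrv : (r u : ℕ) < (r v : ℕ) := by
      by_contra h
      push_neg at h
      exact key v hv u hu (ne_of_gt huv) (le_of_lt hluv) (Fin.le_def.2 h)
    refine ⟨hluv, ?_, hrv⟩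
    by_contra h
    push_neg at h
    -- so (r u) + 1 < l v ; consider y with value (r u) + 1
    have hlvm : (l v : ℕ) ≤ m := Nat.lt_succ_iff.1 (l v).isLt
    set y : Fin (m + 1) := ⟨(r u : ℕ) + 1, by omega⟩ with hy
    obtain ⟨w, hw, hwy1, hwy2⟩ := hdom y
    have hwy1' : (l w : ℕ) ≤ (r u : ℕ) + 1 := hwy1
    have hwy2' : (r u : ℕ) + 1 ≤ (r w : ℕ) := hwy2
    -- w ≠ u, w ≠ v, not between: so w < u or w > v
    have hwu : w ≠ u := by
      intro he; subst he; omega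
    have hwv : w ≠ v := by
      intro he; rw [he] at hwy1'; omega
    rcases lt_trichotomy w u with hlt | heq | hgt
    · -- w < u : l w ≤ l u ≤ r u < r u + 1 ≤ r w, so interval u ⊆ interval w
      have hlwu : l w ≤ l u := by
        rcases hlex _ _ hlt with h' | ⟨h', -⟩
        · exact le_of_lt h'
        · exact le_of_eq h'
      exact key u hu w hw (Ne.symm hwu) hlwu (Fin.le_def.2 (by omega))
    · exact hwu heq
    · rcases lt_trichotomy w v with hlt2 | heq2 | hgt2
      · exact hbtw w hw ⟨hgt, hlt2⟩
      · exact hwv heq2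
      · -- v < w : l v ≤ l w ≤ r u + 1 < l v, contradiction
        have hlvw : l v ≤ l w := by
          rcases hlex _ _ hgt2 with h' | ⟨h', -⟩
          · exact le_of_lt h'
          · exact le_of_eq h'
        have : (l v : ℕ) ≤ (l w : ℕ) := hlvw
        omega
end

section
/- Let G = (X, Y, E) be a Y-convex bipartite graph with Y = {y_1 < ⋯ < y_m} that admits a red dominating set, with X in lex-convex ordering. Call a finite strictly increasing sequence u_1 < u_2 < ⋯ < u_k of X a valid chain if left(u_1) = y_1, right(u_k) = y_m, and left(u_i) < left(u_{i+1}) ≤ right(u_i) + 1 ≤ right(u_{i+1}) for each i = 1, …, k−1, and let k* be the minimum length of a valid chain. Then the map sending a set to its increasing enumeration is a bijection between the minimum cardinality red dominating sets of G and the valid chains of length k*; in particular, the number of MCRD sets of G equals the number of valid chains of length k*. -/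
/-!
In a minimum red dominating set `D` no neighbourhood is contained in another (that vertex
could be dropped), so along the lex-convex order both `left` and `right` strictly increase
on `D`. Consecutive members `a < b` of `D` leave no gap: the vertex `right(a) + 1` is
dominated by a member after `a`, hence at or after `b`, so `left(b) ≤ right(a) + 1`.
Thus the increasing enumeration of a minimum red dominating set is a valid chain.
Conversely the neighbourhoods of a valid chain cover `Y`, so a valid chain is a red
dominating set of its own length. Hence minimum red dominating sets have exactly `k*`
elements, and enumeration and `List.toFinset` are mutually inverse.
-/

/-- A valid chain in the `Y`-convex bipartite graph with `X = Fin n`, `Y = Fin (m+1)`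
and interval neighbourhoods `[l x, r x]`: a nonempty strictly increasing list
`u_1 < ⋯ < u_k` of vertices of `X` with `left(u_1) = y_1`, `right(u_k) = y_m`, and
`left(u_i) < left(u_{i+1}) ≤ right(u_i) + 1 ≤ right(u_{i+1})` for all `i`. -/
def ValidChain {n m : ℕ} (l r : Fin n → Fin (m + 1)) (L : List (Fin n)) : Prop :=
  ∃ hne : L ≠ [],
    L.Chain' (· < ·) ∧
    l (L.head hne) = 0 ∧
    r (L.getLast hne) = Fin.last m ∧
    L.Chain' fun a b =>
      l a < l b ∧ (l b : ℕ) ≤ (r a : ℕ) + 1 ∧ (r a : ℕ) + 1 ≤ (r b : ℕ)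

theorem List.isChain_of_pairwise_lt_of_adjacent {α : Type*} [Preorder α] {R : α → α → Prop}
    {L : List α} (hL : L.Pairwise (· < ·))
    (h : ∀ a ∈ L, ∀ b ∈ L, a < b → (∀ c ∈ L, a < c → b ≤ c) → R a b) :
    L.IsChain R := by
  induction L with
  | nil => exact .nil
  | cons a t ih =>
    rcases t with _ | ⟨b, t⟩
    · exact .singleton a
    obtain ⟨ha, ht⟩ := List.pairwise_cons.mp hL
    refine .cons_cons (h a (by simp) b (by simp) (ha b (by simp)) ?_)
      (ih ht fun x hx y hy hxy hadj => h x (.tail _ hx) y (.tail _ hy) hxy fun c hc hxc => ?_)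
    · intro c hc hac
      rcases List.mem_cons.mp hc with rfl | hc
      · exact absurd hac (lt_irrefl _)
      rcases List.mem_cons.mp hc with rfl | hc
      · exact le_rfl
      · exact (List.rel_of_pairwise_cons ht hc).le
    · rcases List.mem_cons.mp hc with rfl | hc
      · exact absurd ((ha x hx).trans hxc) (lt_irrefl _)
      · exact hadj c hc hxc

section RedDomination

variable {α : Type*} {m : ℕ} (l r : α → Fin (m + 1))

def IsRedDominating (D : Finset α) : Prop :=
  ∀ y : Fin (m + 1), ∃ x ∈ D, l x ≤ y ∧ y ≤ r x

def IsMinRedDominating (D : Finset α) : Prop :=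
  IsRedDominating l r D ∧ ∀ D' : Finset α, IsRedDominating l r D' → D.card ≤ D'.card

def IsLexConvex [LinearOrder α] : Prop :=
  ∀ i j : α, i < j → l i < l j ∨ (l i = l j ∧ r i ≤ r j)

variable {l r}

theorem exists_isMinRedDominating_card_le [Finite α] {D : Finset α}
    (hD : IsRedDominating l r D) : ∃ D₀, IsMinRedDominating l r D₀ ∧ D₀.card ≤ D.card := by
  classical
  have := Fintype.ofFinite α
  obtain ⟨D₀, hD₀, hmin⟩ := Finset.exists_min_image
    (Finset.univ.filter (IsRedDominating l r)) Finset.card ⟨D, by simpa using hD⟩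
  simp only [Finset.mem_filter, Finset.mem_univ, true_and] at hD₀ hmin
  exact ⟨D₀, ⟨hD₀, hmin⟩, hmin D hD⟩

theorem exists_mem_of_isChain {L : List α} (hne : L ≠ [])
    (hL : L.IsChain fun a b => (l b : ℕ) ≤ (r a : ℕ) + 1) {y : Fin (m + 1)}
    (h₁ : l (L.head hne) ≤ y) (h₂ : y ≤ r (L.getLast hne)) : ∃ x ∈ L, l x ≤ y ∧ y ≤ r x := by
  induction L with
  | nil => exact absurd rfl hne
  | cons a t ih =>
    by_cases hya : y ≤ r a
    · exact ⟨a, List.mem_cons_self, h₁, hya⟩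
    rcases t with _ | ⟨b, t⟩
    · exact absurd h₂ hya
    obtain ⟨hab, ht⟩ := List.isChain_cons_cons.mp hL
    have hby : l b ≤ y := by
      rw [not_le, Fin.lt_def] at hya
      rw [Fin.le_def]
      omega
    obtain ⟨x, hx, hxy⟩ := ih (List.cons_ne_nil b t) ht hby (by simpa using h₂)
    exact ⟨x, .tail _ hx, hxy⟩

theorem IsMinRedDominating.not_interval_subset {D : Finset α} (hD : IsMinRedDominating l r D)
    {x x' : α} (hx : x ∈ D) (hx' : x' ∈ D) (hne : x ≠ x') :
    ¬ (l x' ≤ l x ∧ r x ≤ r x') := by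
  classical
  rintro ⟨hl, hr⟩
  have hdom : IsRedDominating l r (D.erase x) := by
    intro y
    obtain ⟨t, ht, hty⟩ := hD.1 y
    by_cases htx : t = x
    · subst htx
      exact ⟨x', Finset.mem_erase.mpr ⟨hne.symm, hx'⟩, hl.trans hty.1, hty.2.trans hr⟩
    · exact ⟨t, Finset.mem_erase.mpr ⟨htx, ht⟩, hty⟩
  have := hD.2 _ hdom
  rw [Finset.card_erase_of_mem hx] at this
  have := Finset.card_pos.mpr ⟨x, hx⟩
  omega

variable [LinearOrder α]

theorem IsLexConvex.monotone (hlex : IsLexConvex l r) : Monotone l := by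
  intro a b hab
  rcases hab.eq_or_lt with rfl | hlt
  · exact le_rfl
  · rcases hlex a b hlt with h | h
    exacts [h.le, h.1.le]

theorem IsMinRedDominating.left_lt_and_right_lt {D : Finset α} (hD : IsMinRedDominating l r D)
    (hlex : IsLexConvex l r) {a b : α} (ha : a ∈ D) (hb : b ∈ D) (hab : a < b) :
    l a < l b ∧ r a < r b := by
  rcases hlex a b hab with hl | ⟨hl, hr⟩
  · refine ⟨hl, lt_of_not_ge fun hr => ?_⟩
    exact hD.not_interval_subset hb ha hab.ne' ⟨hl.le, hr⟩
  · exact absurd ⟨hl.symm.le, hr⟩ (hD.not_interval_subset ha hb hab.ne)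

theorem IsMinRedDominating.right_le {D : Finset α} (hD : IsMinRedDominating l r D)
    (hlex : IsLexConvex l r) {a b : α} (ha : a ∈ D) (hb : b ∈ D) (hab : a ≤ b) :
    r a ≤ r b := by
  rcases hab.eq_or_lt with rfl | hlt
  · exact le_rfl
  · exact (hD.left_lt_and_right_lt hlex ha hb hlt).2.le

theorem IsMinRedDominating.step_of_adjacent {D : Finset α} (hD : IsMinRedDominating l r D)
    (hlex : IsLexConvex l r) {a b : α} (ha : a ∈ D) (hb : b ∈ D) (hab : a < b)
    (hadj : ∀ c ∈ D, a < c → b ≤ c) :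
    l a < l b ∧ (l b : ℕ) ≤ (r a : ℕ) + 1 ∧ (r a : ℕ) + 1 ≤ (r b : ℕ) := by
  obtain ⟨hl, hr⟩ := hD.left_lt_and_right_lt hlex ha hb hab
  refine ⟨hl, ?_, hr⟩
  by_contra! hgap
  have hy : (r a : ℕ) + 1 < m + 1 := by omega
  obtain ⟨t, ht, hlt, hrt⟩ := hD.1 ⟨(r a : ℕ) + 1, hy⟩
  simp only [Fin.le_def] at hlt hrt
  have hat : a < t := lt_of_not_ge fun hta => by
    have := Fin.le_def.mp (hD.right_le hlex ht ha hta)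
    omega
  have := Fin.le_def.mp (hlex.monotone (hadj t ht hat))
  omega

end RedDomination

section ValidChains

variable {n m : ℕ} {l r : Fin n → Fin (m + 1)}

theorem ValidChain.nodup {L : List (Fin n)} (hL : ValidChain l r L) : L.Nodup :=
  (List.isChain_iff_pairwise.mp hL.2.1).nodup

theorem ValidChain.card_toFinset {L : List (Fin n)} (hL : ValidChain l r L) :
    L.toFinset.card = L.length :=
  List.toFinset_card_of_nodup hL.nodup

theorem ValidChain.sort_toFinset {L : List (Fin n)} (hL : ValidChain l r L) :
    L.toFinset.sort (· ≤ ·) = L :=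
  (List.toFinset_sort _ hL.nodup).mpr ((List.isChain_iff_pairwise.mp hL.2.1).imp le_of_lt)

theorem ValidChain.isRedDominating_toFinset {L : List (Fin n)} (hL : ValidChain l r L) :
    IsRedDominating l r L.toFinset := by
  obtain ⟨hne, -, hhead, hlast, hgap⟩ := hL
  intro y
  obtain ⟨x, hx, hxy⟩ := exists_mem_of_isChain hne (hgap.imp fun _ _ h => h.2.1)
    (hhead ▸ Fin.zero_le y) (hlast ▸ Fin.le_last y)
  exact ⟨x, List.mem_toFinset.mpr hx, hxy⟩

theorem IsMinRedDominating.validChain_sort {D : Finset (Fin n)} (hD : IsMinRedDominating l r D)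
    (hlex : IsLexConvex l r) : ValidChain l r (D.sort (· ≤ ·)) := by
  have hsorted : (D.sort (· ≤ ·)).Pairwise (· < ·) := D.sortedLT_sort.pairwise
  obtain ⟨t₀, ht₀, ht₀0⟩ := hD.1 0
  obtain ⟨t₁, ht₁, ht₁m⟩ := hD.1 (Fin.last m)
  have hne : D.sort (· ≤ ·) ≠ [] := List.ne_nil_of_mem ((Finset.mem_sort _).mpr ht₀)
  refine ⟨hne, List.isChain_iff_pairwise.mpr hsorted, ?_, ?_, ?_⟩
  · refine Fin.le_zero_iff.mp ((hlex.monotone ?_).trans ht₀0.1)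
    exact (D.pairwise_sort (· ≤ ·)).rel_head ((Finset.mem_sort _).mpr ht₀)
  · refine le_antisymm (Fin.le_last _) (ht₁m.2.trans (hD.right_le hlex ht₁ ?_ ?_))
    · exact (Finset.mem_sort _).mp (List.getLast_mem hne)
    · exact (D.pairwise_sort (· ≤ ·)).rel_getLast ((Finset.mem_sort _).mpr ht₁)
  · refine List.isChain_of_pairwise_lt_of_adjacent hsorted fun a ha b hb hab hadj => ?_
    simp only [Finset.mem_sort] at ha hb hadj
    exact hD.step_of_adjacent hlex ha hb hab hadj

theorem exists_validChain_length_le (hlex : IsLexConvex l r) {D : Finset (Fin n)}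
    (hD : IsRedDominating l r D) : ∃ L, ValidChain l r L ∧ L.length ≤ D.card := by
  obtain ⟨D₀, hD₀, hcard⟩ := exists_isMinRedDominating_card_le hD
  exact ⟨_, hD₀.validChain_sort hlex, by rwa [Finset.length_sort]⟩

end ValidChains

theorem stmt12_general {n m : ℕ} (l r : Fin n → Fin (m + 1))
    (hlex : ∀ i j : Fin n, i < j → l i < l j ∨ (l i = l j ∧ r i ≤ r j))
    (kstar : ℕ)
    (hks : IsLeast {j : ℕ | ∃ L : List (Fin n), ValidChain l r L ∧ L.length = j} kstar) :
    Set.BijOn (fun D : Finset (Fin n) => D.sort (· ≤ ·))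
      {D : Finset (Fin n) | (∀ y : Fin (m + 1), ∃ x ∈ D, l x ≤ y ∧ y ≤ r x) ∧
        ∀ D' : Finset (Fin n),
          (∀ y : Fin (m + 1), ∃ x ∈ D', l x ≤ y ∧ y ≤ r x) → D.card ≤ D'.card}
      {L : List (Fin n) | ValidChain l r L ∧ L.length = kstar} := by
  have kstar_le_card {D : Finset (Fin n)} (hD : IsRedDominating l r D) : kstar ≤ D.card := by
    obtain ⟨L, hL, hlen⟩ := exists_validChain_length_le hlex hD
    exact (hks.2 ⟨L, hL, rfl⟩).trans hlen
  obtain ⟨L₀, hL₀, hL₀len⟩ := hks.1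
  have card_eq {D : Finset (Fin n)} (hD : IsMinRedDominating l r D) : D.card = kstar := by
    refine le_antisymm ?_ (kstar_le_card hD.1)
    calc D.card ≤ L₀.toFinset.card := hD.2 _ hL₀.isRedDominating_toFinset
      _ = kstar := hL₀.card_toFinset.trans hL₀len
  refine ⟨fun D (hD : IsMinRedDominating l r D) =>
    ⟨hD.validChain_sort hlex, (Finset.length_sort _).trans (card_eq hD)⟩, ?_, ?_⟩
  · intro D₁ _ D₂ _ heq
    simpa only [Finset.sort_toFinset] using congrArg List.toFinset heq
  · rintro L ⟨hL, hlen⟩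
    refine ⟨L.toFinset, ⟨hL.isRedDominating_toFinset, fun D' hD' => ?_⟩, hL.sort_toFinset⟩
    exact (hL.card_toFinset.trans hlen).trans_le (kstar_le_card hD')

/-- Let `G` be a `Y`-convex bipartite graph (`X = Fin n`, `Y = Fin (m+1)`, interval
neighbourhoods `[l x, r x]`) admitting a red dominating set, with `X` in lex-convex
ordering, and let `k*` be the minimum length of a valid chain.  Then the map sending a
set to its increasing enumeration is a bijection from the minimum cardinality red
dominating sets of `G` onto the valid chains of length `k*`; in particular the number
of MCRD sets equals the number of valid chains of length `k*`. -/
theorem stmt12 {n m : ℕ} (l r : Fin n → Fin (m + 1)) (hlr : ∀ x, l x ≤ r x)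
    (hlex : ∀ i j : Fin n, i < j → l i < l j ∨ (l i = l j ∧ r i ≤ r j))
    (hdom : ∃ D : Finset (Fin n), ∀ y : Fin (m + 1), ∃ x ∈ D, l x ≤ y ∧ y ≤ r x)
    (kstar : ℕ)
    (hks : IsLeast {j : ℕ | ∃ L : List (Fin n), ValidChain l r L ∧ L.length = j} kstar) :
    Set.BijOn (fun D : Finset (Fin n) => D.sort (· ≤ ·))
      {D : Finset (Fin n) | (∀ y : Fin (m + 1), ∃ x ∈ D, l x ≤ y ∧ y ≤ r x) ∧
        ∀ D' : Finset (Fin n),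
          (∀ y : Fin (m + 1), ∃ x ∈ D', l x ≤ y ∧ y ≤ r x) → D.card ≤ D'.card}
      {L : List (Fin n) | ValidChain l r L ∧ L.length = kstar} :=
  stmt12_general l r hlex kstar hks
end
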